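/- In any equilibrium (ξ, S) of the discrete single-period Kyle game, if y₁, y₂ have positive realisation probability, y₂ ≥ y₁, and S(y₁) equals the maximal true value v¹, then S(y₂) = v¹. Symmetrically, if S(y₂) equals the minimal true value vᴺ, then S(y₁) = vᴺ. -/

import Mathlib

/-!
An informed trader's optimal order is nondecreasing in the true value, since the gain
`x * (v - P(x))` is supermodular in `(v, x)`. Suppose every value realised at demand `y₁`
is the maximum `v¹`, and that some smaller value `v` is realised at a larger demand
`y₂ = x + z`. Its order `x` is at most the order `x₁` of some `v¹`-trader at `y₁ = x₁ + z₁`,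
and `x ≥ y₂ - 1 ≥ y₁ - 1`, so `x` lies within `1` of `y₁`; the grid assumption then lets
noise carry `x` to `y₁`, so `v` is realised at `y₁` after all. Hence only `v¹` is realised
at `y₂`, and rational pricing gives `S(y₂) = v¹`. The minimum is the mirror image.
-/

open Finset

/-- Average execution price `∫ S(x+z) ζ(dz)` for an insider order of size `x`. -/
noncomputable def avgPrice (EZ : Finset ℝ) (ζ : ℝ → ℝ) (S : ℝ → ℝ) (x : ℝ) : ℝ :=
  ∑ z ∈ EZ, ζ z * S (x + z)

/-- The insider's expected gain from order `x` when the true value is `v`. -/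
noncomputable def gain (EZ : Finset ℝ) (ζ : ℝ → ℝ) (S : ℝ → ℝ) (v x : ℝ) : ℝ :=
  x * (v - avgPrice EZ ζ S x)

/-- Probability that the total demand equals `y`. -/
noncomputable def pY (EV EX EZ : Finset ℝ) (ν ζ : ℝ → ℝ) (ξ : ℝ → ℝ → ℝ) (y : ℝ) : ℝ :=
  ∑ v ∈ EV, ∑ x ∈ EX, ∑ z ∈ EZ, if x + z = y then ν v * ξ v x * ζ z else 0

/-- Joint expectation of the true value on the event that total demand is `y`. -/
noncomputable def pYV (EV EX EZ : Finset ℝ) (ν ζ : ℝ → ℝ) (ξ : ℝ → ℝ → ℝ) (y : ℝ) : ℝ :=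
  ∑ v ∈ EV, ∑ x ∈ EX, ∑ z ∈ EZ, if x + z = y then ν v * ξ v x * ζ z * v else 0

/-- `ξ` is a behaviour strategy: `ξ(v,·)` is a probability vector on `E_X`. -/
def IsStrategy (EV EX : Finset ℝ) (ξ : ℝ → ℝ → ℝ) : Prop :=
  ∀ v ∈ EV, (∀ x ∈ EX, 0 ≤ ξ v x) ∧ ∑ x ∈ EX, ξ v x = 1

/-- Kyle equilibrium of the single-period discrete game: `ξ(v,·)` is supported on
maximisers of the gain given `S`, and `S` satisfies rational pricing given `ξ`
at every total demand with positive probability. -/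
def IsKyleEquilibrium (EV EX EZ : Finset ℝ) (ν ζ : ℝ → ℝ)
    (ξ : ℝ → ℝ → ℝ) (S : ℝ → ℝ) : Prop :=
  IsStrategy EV EX ξ ∧
  (∀ v ∈ EV, ∀ x ∈ EX, 0 < ξ v x → ∀ x' ∈ EX, gain EZ ζ S v x' ≤ gain EZ ζ S v x) ∧
  (∀ y : ℝ, 0 < pY EV EX EZ ν ζ ξ y →
    S y * pY EV EX EZ ν ζ ξ y = pYV EV EX EZ ν ζ ξ y)

theorem Finset.eq_of_sum_mul_eq_sum_mul {ι R : Type*} [Field R] [LinearOrder R]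
    [IsStrictOrderedRing R] {s : Finset ι} {w f g : ι → R} (hw : ∀ i ∈ s, 0 ≤ w i)
    (hfg : ∀ i ∈ s, f i ≤ g i) (h : ∑ i ∈ s, w i * f i = ∑ i ∈ s, w i * g i)
    {i : ι} (hi : i ∈ s) (hwi : w i ≠ 0) : f i = g i :=
  mul_left_cancel₀ hwi <|
    (sum_eq_sum_iff_of_le fun j hj => mul_le_mul_of_nonneg_left (hfg j hj) (hw j hj)).1 h i hi

theorem sub_mul_sub_nonneg_of_gain_le {EZ : Finset ℝ} {ζ S : ℝ → ℝ} {v₀ v x₀ x : ℝ}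
    (h₀ : gain EZ ζ S v₀ x ≤ gain EZ ζ S v₀ x₀) (h : gain EZ ζ S v x₀ ≤ gain EZ ζ S v x) :
    0 ≤ (v - v₀) * (x - x₀) := by
  unfold gain at h₀ h
  nlinarith

theorem exists_add_eq_of_opposite {EX EZ : Finset ℝ} (hZsub : ∀ z ∈ EZ, -1 ≤ z ∧ z ≤ 1)
    (hgrid : ∀ x1 ∈ EX, ∀ x2 ∈ EX, ∀ z1 ∈ EZ,
      x1 + z1 - 1 ≤ x2 → x2 ≤ x1 + z1 + 1 → ∃ z2 ∈ EZ, x2 + z2 = x1 + z1)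
    {x₀ x z₀ z : ℝ} (hx₀ : x₀ ∈ EX) (hx : x ∈ EX) (hz₀ : z₀ ∈ EZ) (hz : z ∈ EZ)
    (hopp : (x ≤ x₀ ∧ x₀ + z₀ ≤ x + z) ∨ (x₀ ≤ x ∧ x + z ≤ x₀ + z₀)) :
    ∃ z' ∈ EZ, x + z' = x₀ + z₀ := by
  obtain ⟨hz₀l, hz₀u⟩ := hZsub z₀ hz₀
  obtain ⟨hzl, hzu⟩ := hZsub z hz
  apply hgrid x₀ hx₀ x hx z₀ hz₀ <;> rcases hopp with ⟨_, _⟩ | ⟨_, _⟩ <;> linarith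

/-- Under full support of `ν` and `ζ`, this says that the event `{V = v, X + Z = y}` has
positive probability. -/
def IsRealizedAt (EX EZ : Finset ℝ) (ξ : ℝ → ℝ → ℝ) (v y : ℝ) : Prop :=
  ∃ x ∈ EX, ∃ z ∈ EZ, x + z = y ∧ 0 < ξ v x

noncomputable def demandWeight (ν ζ : ℝ → ℝ) (ξ : ℝ → ℝ → ℝ) (y : ℝ) (p : ℝ × ℝ × ℝ) : ℝ :=
  if p.2.1 + p.2.2 = y then ν p.1 * ξ p.1 p.2.1 * ζ p.2.2 else 0

section Demand

variable {EV EX EZ : Finset ℝ} {ν ζ : ℝ → ℝ} {ξ : ℝ → ℝ → ℝ} {y : ℝ}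

theorem pY_eq_sum_demandWeight :
    pY EV EX EZ ν ζ ξ y = ∑ p ∈ EV ×ˢ EX ×ˢ EZ, demandWeight ν ζ ξ y p := by
  simp only [pY, demandWeight, sum_product]

theorem pYV_eq_sum_demandWeight_mul :
    pYV EV EX EZ ν ζ ξ y = ∑ p ∈ EV ×ˢ EX ×ˢ EZ, demandWeight ν ζ ξ y p * p.1 := by
  simp only [pYV, demandWeight, sum_product, ite_mul, zero_mul]

theorem demandWeight_nonneg (hν : ∀ v ∈ EV, 0 < ν v) (hζ : ∀ z ∈ EZ, 0 < ζ z)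
    (hξ : ∀ v ∈ EV, ∀ x ∈ EX, 0 ≤ ξ v x) :
    ∀ p ∈ EV ×ˢ EX ×ˢ EZ, 0 ≤ demandWeight ν ζ ξ y p := by
  simp only [mem_product]
  rintro ⟨v, x, z⟩ ⟨hv, hx, hz⟩
  unfold demandWeight
  split_ifs
  · exact mul_nonneg (mul_nonneg (hν v hv).le (hξ v hv x hx)) (hζ z hz).le
  · exact le_rfl

theorem demandWeight_pos {v x z : ℝ} (hν : ∀ v ∈ EV, 0 < ν v) (hζ : ∀ z ∈ EZ, 0 < ζ z)
    (hv : v ∈ EV) (hz : z ∈ EZ) (hxz : x + z = y) (hξ : 0 < ξ v x) :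
    0 < demandWeight ν ζ ξ y (v, x, z) := by
  simp only [demandWeight, if_pos hxz]
  exact mul_pos (mul_pos (hν v hv) hξ) (hζ z hz)

theorem isRealizedAt_of_demandWeight_ne_zero (hξ : ∀ v ∈ EV, ∀ x ∈ EX, 0 ≤ ξ v x)
    {p : ℝ × ℝ × ℝ} (hp : p ∈ EV ×ˢ EX ×ˢ EZ) (hw : demandWeight ν ζ ξ y p ≠ 0) :
    IsRealizedAt EX EZ ξ p.1 y := by
  obtain ⟨v, x, z⟩ := p
  simp only [mem_product] at hp
  obtain ⟨hv, hx, hz⟩ := hp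
  unfold demandWeight at hw
  split_ifs at hw with hxz
  · refine ⟨x, hx, z, hz, hxz, (hξ v hv x hx).lt_of_ne fun h => hw ?_⟩
    simp [← h]
  · exact absurd rfl hw

theorem exists_isRealizedAt_of_pY_ne_zero (hξ : ∀ v ∈ EV, ∀ x ∈ EX, 0 ≤ ξ v x)
    (hy : pY EV EX EZ ν ζ ξ y ≠ 0) : ∃ v ∈ EV, IsRealizedAt EX EZ ξ v y := by
  rw [pY_eq_sum_demandWeight] at hy
  obtain ⟨p, hp, hw⟩ := exists_ne_zero_of_sum_ne_zero hy
  exact ⟨p.1, (mem_product.1 hp).1, isRealizedAt_of_demandWeight_ne_zero hξ hp hw⟩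

theorem pYV_eq_mul_pY_of_forall_isRealizedAt (hξ : ∀ v ∈ EV, ∀ x ∈ EX, 0 ≤ ξ v x) {c : ℝ}
    (hc : ∀ v ∈ EV, IsRealizedAt EX EZ ξ v y → v = c) :
    pYV EV EX EZ ν ζ ξ y = c * pY EV EX EZ ν ζ ξ y := by
  rw [pYV_eq_sum_demandWeight_mul, pY_eq_sum_demandWeight, mul_sum]
  refine sum_congr rfl fun p hp => ?_
  by_cases hw : demandWeight ν ζ ξ y p = 0
  · simp [hw]
  · rw [hc p.1 (mem_product.1 hp).1 (isRealizedAt_of_demandWeight_ne_zero hξ hp hw), mul_comm]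

theorem sum_demandWeight_mul_eq_of_pYV_eq {c : ℝ}
    (hpYV : pYV EV EX EZ ν ζ ξ y = c * pY EV EX EZ ν ζ ξ y) :
    ∑ p ∈ EV ×ˢ EX ×ˢ EZ, demandWeight ν ζ ξ y p * p.1 =
      ∑ p ∈ EV ×ˢ EX ×ˢ EZ, demandWeight ν ζ ξ y p * c := by
  rw [← pYV_eq_sum_demandWeight_mul, ← sum_mul, ← pY_eq_sum_demandWeight, hpYV, mul_comm]

theorem eq_of_isRealizedAt_of_pYV_eq_of_le (hν : ∀ v ∈ EV, 0 < ν v) (hζ : ∀ z ∈ EZ, 0 < ζ z)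
    (hξ : ∀ v ∈ EV, ∀ x ∈ EX, 0 ≤ ξ v x) {c : ℝ} (hle : ∀ v ∈ EV, v ≤ c)
    (hpYV : pYV EV EX EZ ν ζ ξ y = c * pY EV EX EZ ν ζ ξ y)
    {v : ℝ} (hv : v ∈ EV) (hr : IsRealizedAt EX EZ ξ v y) : v = c := by
  obtain ⟨x, hx, z, hz, hxz, hξv⟩ := hr
  exact eq_of_sum_mul_eq_sum_mul (demandWeight_nonneg hν hζ hξ)
    (fun p hp => hle p.1 (mem_product.1 hp).1) (sum_demandWeight_mul_eq_of_pYV_eq hpYV)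
    (mem_product.2 ⟨hv, mem_product.2 ⟨hx, hz⟩⟩) (demandWeight_pos hν hζ hv hz hxz hξv).ne'

theorem eq_of_isRealizedAt_of_pYV_eq_of_ge (hν : ∀ v ∈ EV, 0 < ν v) (hζ : ∀ z ∈ EZ, 0 < ζ z)
    (hξ : ∀ v ∈ EV, ∀ x ∈ EX, 0 ≤ ξ v x) {c : ℝ} (hge : ∀ v ∈ EV, c ≤ v)
    (hpYV : pYV EV EX EZ ν ζ ξ y = c * pY EV EX EZ ν ζ ξ y)
    {v : ℝ} (hv : v ∈ EV) (hr : IsRealizedAt EX EZ ξ v y) : v = c := by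
  obtain ⟨x, hx, z, hz, hxz, hξv⟩ := hr
  exact (eq_of_sum_mul_eq_sum_mul (demandWeight_nonneg hν hζ hξ)
    (fun p hp => hge p.1 (mem_product.1 hp).1) (sum_demandWeight_mul_eq_of_pYV_eq hpYV).symm
    (mem_product.2 ⟨hv, mem_product.2 ⟨hx, hz⟩⟩) (demandWeight_pos hν hζ hv hz hxz hξv).ne').symm

end Demand

namespace IsKyleEquilibrium

variable {EV EX EZ : Finset ℝ} {ν ζ : ℝ → ℝ} {ξ : ℝ → ℝ → ℝ} {S : ℝ → ℝ}

theorem nonneg (heq : IsKyleEquilibrium EV EX EZ ν ζ ξ S) : ∀ v ∈ EV, ∀ x ∈ EX, 0 ≤ ξ v x :=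
  fun v hv => (heq.1 v hv).1

theorem pYV_eq_mul_pY (heq : IsKyleEquilibrium EV EX EZ ν ζ ξ S) {y : ℝ}
    (hy : 0 < pY EV EX EZ ν ζ ξ y) :
    pYV EV EX EZ ν ζ ξ y = S y * pY EV EX EZ ν ζ ξ y :=
  (heq.2.2 y hy).symm

theorem price_eq_of_forall_isRealizedAt_eq (heq : IsKyleEquilibrium EV EX EZ ν ζ ξ S)
    {y c : ℝ} (hy : 0 < pY EV EX EZ ν ζ ξ y)
    (honly : ∀ v ∈ EV, IsRealizedAt EX EZ ξ v y → v = c) : S y = c :=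
  mul_right_cancel₀ hy.ne' <|
    (heq.pYV_eq_mul_pY hy).symm.trans (pYV_eq_mul_pY_of_forall_isRealizedAt heq.nonneg honly)

theorem sub_mul_sub_nonneg (heq : IsKyleEquilibrium EV EX EZ ν ζ ξ S) {v₀ v x₀ x : ℝ}
    (hv₀ : v₀ ∈ EV) (hv : v ∈ EV) (hx₀ : x₀ ∈ EX) (hx : x ∈ EX)
    (hξ₀ : 0 < ξ v₀ x₀) (hξ : 0 < ξ v x) : 0 ≤ (v - v₀) * (x - x₀) :=
  sub_mul_sub_nonneg_of_gain_le (heq.2.1 v₀ hv₀ x₀ hx₀ hξ₀ x hx) (heq.2.1 v hv x hx hξ x₀ hx₀)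

theorem isRealizedAt_of_opposite (heq : IsKyleEquilibrium EV EX EZ ν ζ ξ S)
    (hZsub : ∀ z ∈ EZ, -1 ≤ z ∧ z ≤ 1)
    (hgrid : ∀ x1 ∈ EX, ∀ x2 ∈ EX, ∀ z1 ∈ EZ,
      x1 + z1 - 1 ≤ x2 → x2 ≤ x1 + z1 + 1 → ∃ z2 ∈ EZ, x2 + z2 = x1 + z1)
    {v₀ v y₀ y : ℝ} (hv₀ : v₀ ∈ EV) (hr₀ : IsRealizedAt EX EZ ξ v₀ y₀)
    (hv : v ∈ EV) (hr : IsRealizedAt EX EZ ξ v y)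
    (hopp : (v < v₀ ∧ y₀ ≤ y) ∨ (v₀ < v ∧ y ≤ y₀)) :
    IsRealizedAt EX EZ ξ v y₀ := by
  obtain ⟨x₀, hx₀, z₀, hz₀, rfl, hξ₀⟩ := hr₀
  obtain ⟨x, hx, z, hz, rfl, hξ⟩ := hr
  have hmono := heq.sub_mul_sub_nonneg hv₀ hv hx₀ hx hξ₀ hξ
  obtain ⟨z', hz', hxz'⟩ := exists_add_eq_of_opposite hZsub hgrid hx₀ hx hz₀ hz <| by
    rcases hopp with ⟨hlt, hy⟩ | ⟨hlt, hy⟩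
    · exact Or.inl ⟨by nlinarith, hy⟩
    · exact Or.inr ⟨by nlinarith, hy⟩
  exact ⟨x, hx, z', hz', hxz', hξ⟩

theorem le_and_ge_of_forall_isRealizedAt_eq (heq : IsKyleEquilibrium EV EX EZ ν ζ ξ S)
    (hZsub : ∀ z ∈ EZ, -1 ≤ z ∧ z ≤ 1)
    (hgrid : ∀ x1 ∈ EX, ∀ x2 ∈ EX, ∀ z1 ∈ EZ,
      x1 + z1 - 1 ≤ x2 → x2 ≤ x1 + z1 + 1 → ∃ z2 ∈ EZ, x2 + z2 = x1 + z1)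
    {v₀ v y₀ y : ℝ} (hv₀ : v₀ ∈ EV) (hr₀ : IsRealizedAt EX EZ ξ v₀ y₀)
    (honly : ∀ w ∈ EV, IsRealizedAt EX EZ ξ w y₀ → w = v₀)
    (hv : v ∈ EV) (hr : IsRealizedAt EX EZ ξ v y) :
    (y₀ ≤ y → v₀ ≤ v) ∧ (y ≤ y₀ → v ≤ v₀) := by
  constructor <;> intro hy <;> by_contra! hlt
  · have := honly v hv (heq.isRealizedAt_of_opposite hZsub hgrid hv₀ hr₀ hv hr (Or.inl ⟨hlt, hy⟩))
    exact hlt.ne this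
  · have := honly v hv (heq.isRealizedAt_of_opposite hZsub hgrid hv₀ hr₀ hv hr (Or.inr ⟨hlt, hy⟩))
    exact hlt.ne' this

end IsKyleEquilibrium

theorem price_extreme_absorbing
    (EV EX EZ : Finset ℝ) (hEV : EV.Nonempty)
    (ν ζ : ℝ → ℝ)
    (hν : ∀ v ∈ EV, 0 < ν v)
    (hζ : ∀ z ∈ EZ, 0 < ζ z)
    (hZsub : ∀ z ∈ EZ, -1 ≤ z ∧ z ≤ 1)
    (hgrid : ∀ x1 ∈ EX, ∀ x2 ∈ EX, ∀ z1 ∈ EZ,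
      x1 + z1 - 1 ≤ x2 → x2 ≤ x1 + z1 + 1 → ∃ z2 ∈ EZ, x2 + z2 = x1 + z1)
    (ξ : ℝ → ℝ → ℝ) (S : ℝ → ℝ)
    (heq : IsKyleEquilibrium EV EX EZ ν ζ ξ S) :
    ∀ y1 y2 : ℝ, 0 < pY EV EX EZ ν ζ ξ y1 → 0 < pY EV EX EZ ν ζ ξ y2 → y1 ≤ y2 →
      (S y1 = EV.max' hEV → S y2 = EV.max' hEV) ∧
      (S y2 = EV.min' hEV → S y1 = EV.min' hEV) := by
  intro y1 y2 h1 h2 hle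
  have hξ := heq.nonneg
  constructor
  · intro hS1
    have honly : ∀ v ∈ EV, IsRealizedAt EX EZ ξ v y1 → v = EV.max' hEV :=
      fun v => eq_of_isRealizedAt_of_pYV_eq_of_le hν hζ hξ (fun w => le_max' EV w)
        (hS1 ▸ heq.pYV_eq_mul_pY h1)
    obtain ⟨v1, hv1, hr1⟩ := exists_isRealizedAt_of_pY_ne_zero hξ h1.ne'
    rw [honly v1 hv1 hr1] at hr1
    refine heq.price_eq_of_forall_isRealizedAt_eq h2 fun v hv hr => le_antisymm (le_max' EV v hv) ?_
    exact (heq.le_and_ge_of_forall_isRealizedAt_eq hZsub hgrid (max'_mem EV hEV) hr1 honly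
      hv hr).1 hle
  · intro hS2
    have honly : ∀ v ∈ EV, IsRealizedAt EX EZ ξ v y2 → v = EV.min' hEV :=
      fun v => eq_of_isRealizedAt_of_pYV_eq_of_ge hν hζ hξ (fun w => min'_le EV w)
        (hS2 ▸ heq.pYV_eq_mul_pY h2)
    obtain ⟨v2, hv2, hr2⟩ := exists_isRealizedAt_of_pY_ne_zero hξ h2.ne'
    rw [honly v2 hv2 hr2] at hr2
    refine heq.price_eq_of_forall_isRealizedAt_eq h1 fun v hv hr => le_antisymm ?_ (min'_le EV v hv)
    exact (heq.le_and_ge_of_forall_isRealizedAt_eq hZsub hgrid (min'_mem EV hEV) hr2 honly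
      hv hr).2 hle
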